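/- Let d ≥ 2 be an integer, h = π/n for some n ∈ ℕ, and u ∈ H^h_d. Then for every k ∈ ℤ^{d−1} and every n ∈ ℕ₀, the discrete Fourier transform of the n-th layer satisfies (ℱ(u(·, n·h)))(k) = (Q(λ(h·k)))^{−n} · (ℱ(u(·, 0)))(k); i.e. on the Fourier side the discrete harmonic extension to the half space acts layerwise as multiplication by Q(λ(h·k))^{−1}. -/

import Mathlib

open scoped Real

/-!
Fourier transform of a bounded periodic discrete harmonic function on the
half-space mesh `(hℤ^{d-1}) × (hℕ₀)` with `h = π/n`.  A lattice point `h·x`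
of `hℤ^{d-1}` is represented by its integer coordinate `x : Fin (d-1) → ℤ`,
and a height `h·m` by `m : ℕ`.
-/

/-- The cube `I_n^m = {-n+1,…,n}^m` of integer points, so that
`ω_h^m = h·I_{π/h}^m` with `h = π/n`. -/
noncomputable def ILpi (m n : ℕ) : Finset (Fin m → ℤ) :=
  Finset.Icc (fun _ => -(n:ℤ) + 1) (fun _ => (n:ℤ))

/-- The discrete Fourier transform on the mesh `hℤ^m`, `h = π/n`:
`(ℱv)(k) = h^m Σ_{x ∈ ω_h^m} v(hx) e^{−i k·(hx)}`. -/
noncomputable def dft (m n : ℕ) (v : (Fin m → ℤ) → ℂ) (k : Fin m → ℤ) : ℂ :=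
  ((π / (n:ℝ)) ^ m : ℝ) *
    ∑ x ∈ ILpi m n, v x *
      Complex.exp (-Complex.I * ((∑ i, (k i : ℝ) * (π / (n:ℝ) * (x i : ℝ))) : ℝ))

/-- `Q(z) = z + √(z+1)·√(z−1)` (real form: the statement only evaluates `Q` at
real arguments `λ(t) ≥ 1`, where the principal complex square roots agree with
the real ones). -/
noncomputable def Qr (z : ℝ) : ℝ := z + Real.sqrt (z+1) * Real.sqrt (z-1)

/-- `λ(t) = d − Σ_{i=1}^{d-1} cos t_i`. -/
noncomputable def lam (d : ℕ) (t : Fin (d-1) → ℝ) : ℝ := (d:ℝ) - ∑ i, Real.cos (t i)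

/-- `u` belongs to `H^h_{d,≥0}` with `h = π/n`: bounded, `2π`-periodic in the
first `d-1` variables (i.e. `2n`-periodic in integer coordinates), and
discrete harmonic at every point of `(hℤ^{d-1}) × (hℕ)`. -/
def HalfHarmMesh (d n : ℕ) (u : (Fin (d-1) → ℤ) → ℕ → ℂ) : Prop :=
  (∃ B : ℝ, ∀ x y, ‖u x y‖ ≤ B) ∧
  (∀ x y i, u (x + (2*n) • Pi.single i 1) y = u x y) ∧
  (∀ x y, (∑ i, (u (x + Pi.single i 1) (y+1) + u (x - Pi.single i 1) (y+1)))
      + u x (y+2) + u x y = 2 * d * u x (y+1))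

/-!
Translating a layer `u(·, y)` by `±eᵢ` multiplies its transform by `e^{±i h kᵢ}`, so for each
frequency `k` the harmonicity equation becomes the recurrence `F(y+2) + F(y) = 2λ F(y+1)` for
`F(y) = ℱ(u(·, y))(k)`, whose characteristic roots are `Q(λ)` and `Q(λ)⁻¹` because
`Q(λ) + Q(λ)⁻¹ = 2λ`. As `u` is bounded so is `F`, which rules out the growing solution `Q(λ)^y`
(or `y`, when `λ = 1`), leaving `F(y) = Q(λ)^{-y} F(0)`.
-/

lemma mem_ILpi {m n : ℕ} {x : Fin m → ℤ} :
    x ∈ ILpi m n ↔ ∀ j, -(n : ℤ) + 1 ≤ x j ∧ x j ≤ n := by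
  simp [ILpi, Pi.le_def, forall_and]

lemma sum_ILpi_comp_add_single {M : Type*} [AddCommMonoid M] {m n : ℕ}
    {g : (Fin m → ℤ) → M} {i : Fin m} (hg : ∀ x, g (x + (2 * n) • Pi.single i 1) = g x) :
    ∑ x ∈ ILpi m n, g (x + Pi.single i 1) = ∑ x ∈ ILpi m n, g x := by
  -- `x ↦ x + eᵢ`, wrapped around in the `i`-th coordinate, permutes the box
  refine Finset.sum_nbij' (fun x => Function.update x i (if x i = n then -n + 1 else x i + 1))
    (fun x => Function.update x i (if x i = -n + 1 then n else x i - 1)) ?_ ?_ ?_ ?_ ?_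
  all_goals intro x hx
  all_goals simp only [mem_ILpi] at hx ⊢
  rotate_right
  · split_ifs with h
    · refine (congrArg g ?_).trans (hg _)
      ext j
      rcases eq_or_ne j i with rfl | hj <;> simp [*]
      ring
    · congr 1; ext j
      rcases eq_or_ne j i with rfl | hj <;> simp [*]
  all_goals first | intro j | ext j
  all_goals rcases eq_or_ne j i with rfl | hj
  all_goals simp only [Function.update_self, Function.update_of_ne, ne_eq, *, not_false_eq_true]
  all_goals first | exact hx j | trivial | (specialize hx j; split_ifs <;> omega)

noncomputable def dftChar (m n : ℕ) (k x : Fin m → ℤ) : ℂ :=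
  Complex.exp (-Complex.I * ((∑ i, (k i : ℝ) * (π / (n:ℝ) * (x i : ℝ))) : ℝ))

lemma dft_eq_sum_mul_dftChar (m n : ℕ) (v : (Fin m → ℤ) → ℂ) (k : Fin m → ℤ) :
    dft m n v k = ((π / n) ^ m : ℝ) * ∑ x ∈ ILpi m n, v x * dftChar m n k x := rfl

lemma dftChar_add_zsmul_single (m n : ℕ) (k x : Fin m → ℤ) (i : Fin m) (c : ℤ) :
    dftChar m n k (x + c • Pi.single i 1) =
      Complex.exp (-Complex.I * (π / n * k i * c : ℝ)) * dftChar m n k x := by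
  have hphase : ∑ j, (k j : ℝ) * (π / n * ((x + c • Pi.single i 1 : Fin m → ℤ) j : ℤ)) =
      π / n * k i * c + ∑ j, (k j : ℝ) * (π / n * x j) := by
    simp only [Pi.add_apply, Pi.smul_apply, smul_eq_mul, Int.cast_add, mul_add,
      Finset.sum_add_distrib, Pi.single_apply, Int.cast_ite, Int.cast_zero,
      mul_ite, mul_one, mul_zero, Finset.sum_ite_eq', Finset.mem_univ, if_true]
    ring
  rw [dftChar, dftChar, hphase, ← Complex.exp_add]
  push_cast
  ring_nf

lemma dftChar_add_two_mul_single (m n : ℕ) (k x : Fin m → ℤ) (i : Fin m) :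
    dftChar m n k (x + (2 * n) • Pi.single i 1) = dftChar m n k x := by
  rw [← natCast_zsmul, dftChar_add_zsmul_single]
  rcases eq_or_ne n 0 with rfl | hn
  · simp
  · have : -Complex.I * ((π / n * k i * ((2 * n : ℕ) : ℤ) : ℝ) : ℂ) =
        ((-k i : ℤ) : ℂ) * (2 * π * Complex.I) := by
      push_cast
      field_simp
    rw [this, Complex.exp_int_mul_two_pi_mul_I, one_mul]

lemma norm_dftChar (m n : ℕ) (k x : Fin m → ℤ) : ‖dftChar m n k x‖ = 1 := by
  rw [dftChar, neg_mul, ← mul_neg, mul_comm, ← Complex.ofReal_neg, Complex.norm_exp_ofReal_mul_I]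

section Dft

variable {m n : ℕ} {v : (Fin m → ℤ) → ℂ} {i : Fin m}

lemma dft_comp_add_single (hv : ∀ x, v (x + (2 * n) • Pi.single i 1) = v x) (k : Fin m → ℤ) :
    dft m n (fun x => v (x + Pi.single i 1)) k =
      Complex.exp ((π / n * k i : ℝ) * Complex.I) * dft m n v k := by
  have hchar : ∀ x, dftChar m n k x =
      Complex.exp ((π / n * k i : ℝ) * Complex.I) * dftChar m n k (x + Pi.single i 1) := by
    intro x
    have h := dftChar_add_zsmul_single m n k x i 1
    rw [one_zsmul] at h
    rw [h, ← mul_assoc, ← Complex.exp_add]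
    push_cast
    ring_nf
    rw [Complex.exp_zero, one_mul]
  have hperiodic : ∀ x, v (x + (2 * n) • Pi.single i 1) *
      dftChar m n k (x + (2 * n) • Pi.single i 1) = v x * dftChar m n k x := fun x => by
    rw [hv, dftChar_add_two_mul_single]
  simp only [dft_eq_sum_mul_dftChar]
  conv_lhs => enter [2, 2, x]; rw [hchar, mul_left_comm]
  rw [← Finset.mul_sum, sum_ILpi_comp_add_single (g := fun x => v x * dftChar m n k x) hperiodic]
  ring

lemma dft_comp_sub_single (hv : ∀ x, v (x + (2 * n) • Pi.single i 1) = v x) (k : Fin m → ℤ) :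
    dft m n (fun x => v (x - Pi.single i 1)) k =
      Complex.exp (-(π / n * k i : ℝ) * Complex.I) * dft m n v k := by
  have h := dft_comp_add_single (v := fun x => v (x - Pi.single i 1)) (fun x => by
    rw [add_sub_right_comm, hv]) k
  simp only [add_sub_cancel_right] at h
  rw [h, ← mul_assoc, ← Complex.exp_add]
  simp

lemma dft_add (f g : (Fin m → ℤ) → ℂ) (k : Fin m → ℤ) :
    dft m n (fun x => f x + g x) k = dft m n f k + dft m n g k := by
  simp only [dft_eq_sum_mul_dftChar, add_mul, Finset.sum_add_distrib, mul_add]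

lemma dft_const_mul (c : ℂ) (f : (Fin m → ℤ) → ℂ) (k : Fin m → ℤ) :
    dft m n (fun x => c * f x) k = c * dft m n f k := by
  simp only [dft_eq_sum_mul_dftChar, mul_assoc, ← Finset.mul_sum]
  ring

lemma dft_sum {ι : Type*} (s : Finset ι) (f : ι → (Fin m → ℤ) → ℂ) (k : Fin m → ℤ) :
    dft m n (fun x => ∑ j ∈ s, f j x) k = ∑ j ∈ s, dft m n (f j) k := by
  simp only [dft_eq_sum_mul_dftChar, Finset.sum_mul, ← Finset.mul_sum]
  rw [Finset.sum_comm]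

lemma dft_sum_neighbors (hv : ∀ x i, v (x + (2 * n) • Pi.single i 1) = v x) (k : Fin m → ℤ) :
    dft m n (fun x => ∑ i, (v (x + Pi.single i 1) + v (x - Pi.single i 1))) k =
      (2 * ∑ i, Real.cos (π / n * k i) : ℝ) * dft m n v k := by
  rw [dft_sum, Complex.ofReal_mul, Complex.ofReal_sum, Finset.mul_sum, Finset.sum_mul]
  refine Finset.sum_congr rfl fun i _ => ?_
  rw [dft_add, dft_comp_add_single (hv · i), dft_comp_sub_single (hv · i), ← add_mul,
    ← Complex.two_cos]
  push_cast
  ring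

lemma norm_dft_le {B : ℝ} (hv : ∀ x, ‖v x‖ ≤ B) (k : Fin m → ℤ) :
    ‖dft m n v k‖ ≤ (π / n) ^ m * ((ILpi m n).card * B) := by
  rw [dft_eq_sum_mul_dftChar, norm_mul, Complex.norm_real, Real.norm_of_nonneg (by positivity)]
  gcongr
  calc ‖∑ x ∈ ILpi m n, v x * dftChar m n k x‖ ≤ ∑ x ∈ ILpi m n, ‖v x * dftChar m n k x‖ :=
        norm_sum_le _ _
    _ ≤ ∑ _x ∈ ILpi m n, B := Finset.sum_le_sum fun x _ => by
        rw [norm_mul, norm_dftChar, mul_one]; exact hv x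
    _ = (ILpi m n).card * B := by rw [Finset.sum_const, nsmul_eq_mul]

end Dft

open Filter

section Recurrence

variable {E : Type*} [NormedAddCommGroup E] [NormedSpace ℝ E]

lemma eq_zero_of_norm_smul_le_of_tendsto {c : ℕ → ℝ} (hc : Tendsto c atTop atTop) {a : E}
    {C : ℝ} (h : ∀ m, ‖c m • a‖ ≤ C) : a = 0 := by
  by_contra ha
  have ha' : 0 < ‖a‖ := norm_pos_iff.mpr ha
  obtain ⟨m, hm⟩ := (hc.eventually_gt_atTop (C / ‖a‖)).exists
  have := h m
  rw [norm_smul, Real.norm_eq_abs] at this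
  have : c m * ‖a‖ ≤ C := (mul_le_mul_of_nonneg_right (le_abs_self _) ha'.le).trans this
  rw [div_lt_iff₀ ha'] at hm
  linarith

lemma eq_inv_pow_smul_of_bounded_of_recurrence {Q : ℝ} (hQ : 1 ≤ Q) {F : ℕ → E} {C : ℝ}
    (hF : ∀ m, ‖F m‖ ≤ C) (hrec : ∀ m, F (m + 2) + F m = (Q + Q⁻¹) • F (m + 1)) (m : ℕ) :
    F m = Q⁻¹ ^ m • F 0 := by
  have hQ0 : Q ≠ 0 := by positivity
  set G : ℕ → E := fun m => F (m + 1) - Q⁻¹ • F m with hG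
  have hG_pow : ∀ m, G m = Q ^ m • G 0 := by
    intro m
    induction m with
    | zero => simp
    | succ p ih =>
      rw [pow_succ', mul_smul, ← ih]
      simp only [hG, smul_sub, smul_smul, mul_inv_cancel₀ hQ0, one_smul]
      rw [eq_sub_iff_add_eq, sub_add_eq_add_sub, hrec, add_smul, add_sub_cancel_right]
  have hG_le : ∀ m, ‖G m‖ ≤ C + C := by
    have hQinv : ‖Q⁻¹‖ ≤ 1 := by
      rw [norm_inv, Real.norm_of_nonneg (by positivity)]
      exact inv_le_one_of_one_le₀ hQ
    refine fun m => (norm_sub_le _ _).trans (add_le_add (hF _) ?_)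
    rw [norm_smul]
    exact (mul_le_of_le_one_left (norm_nonneg _) hQinv).trans (hF m)
  have hG0 : G 0 = 0 := by
    rcases hQ.eq_or_lt with rfl | hQ1
    · have hF_lin : ∀ m, F m = F 0 + (m : ℝ) • G 0 := by
        intro m
        induction m with
        | zero => simp
        | succ p ih =>
          have hstep : F (p + 1) = F p + G p := by simp [hG]
          rw [hstep, hG_pow p, one_pow, one_smul, ih, Nat.cast_succ, add_smul, one_smul,
            add_assoc]
      refine eq_zero_of_norm_smul_le_of_tendsto tendsto_natCast_atTop_atTop (C := C + C)
        fun m => ?_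
      rw [← add_sub_cancel_left (F 0) ((m : ℝ) • G 0), ← hF_lin]
      exact (norm_sub_le _ _).trans (add_le_add (hF _) (hF _))
    · exact eq_zero_of_norm_smul_le_of_tendsto (tendsto_pow_atTop_atTop_of_one_lt hQ1)
        fun m => hG_pow m ▸ hG_le m
  have hstep : ∀ p, F (p + 1) = Q⁻¹ • F p := fun p => by
    have := hG_pow p
    rw [hG0, smul_zero] at this
    exact sub_eq_zero.mp this
  induction m with
  | zero => simp
  | succ p ih => rw [hstep, ih, smul_smul, pow_succ']

lemma one_le_Qr {l : ℝ} (hl : 1 ≤ l) : 1 ≤ Qr l := by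
  unfold Qr
  nlinarith [Real.sqrt_nonneg (l + 1), Real.sqrt_nonneg (l - 1)]

lemma Qr_add_inv {l : ℝ} (hl : 1 ≤ l) : Qr l + (Qr l)⁻¹ = 2 * l := by
  have hconj : Qr l * (l - √(l + 1) * √(l - 1)) = 1 := by
    have : (√(l + 1) * √(l - 1)) ^ 2 = (l + 1) * (l - 1) := by
      rw [mul_pow, Real.sq_sqrt (by linarith), Real.sq_sqrt (by linarith)]
    unfold Qr
    linear_combination -this
  rw [inv_eq_of_mul_eq_one_right hconj, Qr]
  ring

lemma one_le_lam {d : ℕ} (hd : 1 ≤ d) (t : Fin (d - 1) → ℝ) : 1 ≤ lam d t := by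
  have hcos : ∑ i, Real.cos (t i) ≤ d - 1 := by
    calc ∑ i, Real.cos (t i) ≤ ∑ _i : Fin (d - 1), (1 : ℝ) :=
          Finset.sum_le_sum fun i _ => Real.cos_le_one _
      _ = d - 1 := by simp [Nat.cast_sub hd]
  rw [lam]
  linarith

lemma HalfHarmMesh.dft_recurrence {d n : ℕ} {u : (Fin (d - 1) → ℤ) → ℕ → ℂ}
    (hu : HalfHarmMesh d n u) (k : Fin (d - 1) → ℤ) (y : ℕ) :
    dft (d - 1) n (fun x => u x (y + 2)) k + dft (d - 1) n (fun x => u x y) k =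
      (2 * lam d (fun i => π / n * k i) : ℝ) * dft (d - 1) n (fun x => u x (y + 1)) k := by
  have h := congrArg (dft (d - 1) n · k) (funext (hu.2.2 · y))
  simp only [dft_add, dft_const_mul] at h
  rw [dft_sum_neighbors (v := fun z => u z (y + 1)) (fun x i => hu.2.1 x (y + 1) i)] at h
  rw [lam]
  push_cast at h ⊢
  linear_combination h

theorem fourier_of_halfspace_harmonic_general
    (d n : ℕ) (hd : 2 ≤ d)
    (u : (Fin (d-1) → ℤ) → ℕ → ℂ) (hu : HalfHarmMesh d n u) :
    ∀ (k : Fin (d-1) → ℤ) (m : ℕ),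
      dft (d-1) n (fun x => u x m) k
        = ((Qr (lam d (fun i => π / (n:ℝ) * (k i : ℝ))) : ℂ)) ^ (-(m:ℤ)) *
            dft (d-1) n (fun x => u x 0) k := by
  intro k m
  have hl := one_le_lam (by omega) fun i => π / (n:ℝ) * (k i : ℝ)
  obtain ⟨B, hB⟩ := hu.1
  have hdecay := eq_inv_pow_smul_of_bounded_of_recurrence (one_le_Qr hl)
    (F := fun m => dft (d-1) n (fun x => u x m) k) (fun m => norm_dft_le (hB · m) k)
    (fun y => by rw [Qr_add_inv hl, Complex.real_smul]; exact hu.dft_recurrence k y) m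
  rw [hdecay, Complex.real_smul, zpow_neg, zpow_natCast, inv_pow]
  push_cast
  rfl

/-- **Fourier transform of the harmonic extension.**  For every `k ∈ ℤ^{d-1}`
and every `m ∈ ℕ₀`,
`(ℱ(u(·, m·h)))(k) = (Q(λ(h·k)))^{-m} · (ℱ(u(·,0)))(k)`. -/
theorem fourier_of_halfspace_harmonic
    (d n : ℕ) (hd : 2 ≤ d) (hn : 1 ≤ n)
    (u : (Fin (d-1) → ℤ) → ℕ → ℂ) (hu : HalfHarmMesh d n u) :
    ∀ (k : Fin (d-1) → ℤ) (m : ℕ),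
      dft (d-1) n (fun x => u x m) k
        = ((Qr (lam d (fun i => π / (n:ℝ) * (k i : ℝ))) : ℂ)) ^ (-(m:ℤ)) *
            dft (d-1) n (fun x => u x 0) k :=
  fourier_of_halfspace_harmonic_general d n hd u hu
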